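/- arXiv:2403.17282 — 13 statements merged into one kernel-verified Lean document; each statement's English description precedes it below -/
import Mathlib

section
/- In a D-regular constellation P, every idempotent is a right identity; hence E(P) = RI(P) = D(P). -/
open scoped Classical

/-- A constellation: a partial binary operation (encoded via `Option`) together with a
domain operation `D`, satisfying (Const1), (Const2) and (Const3). -/
structure Constellation (Q : Type*) where
  mul : Q → Q → Option Q
  D : Q → Q
  const1 : ∀ x y z w v, mul y z = some w → mul x w = some v →
    ∃ u, mul x y = some u ∧ mul u z = some v
  const2 : ∀ x y z u v, mul x y = some u → mul y z = some v → (mul x v).isSome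
  D_mul : ∀ x, mul (D x) x = some x
  D_ri : ∀ x s t, mul s (D x) = some t → t = s
  D_unique : ∀ x e, (∀ s t, mul s e = some t → t = s) → mul e x = some x → e = D x

namespace Constellation
variable {Q : Type*} (C : Constellation Q)

/-- `e` is a projection, i.e. an element of `D(Q)`. -/
def IsProj (e : Q) : Prop := ∃ s, e = C.D s

/-- `e` is a right identity. -/
def IsRightId (e : Q) : Prop := ∀ s t, C.mul s e = some t → t = s

/-- `e` is an idempotent. -/
def Idem (e : Q) : Prop := C.mul e e = some e

/-- D-regularity: every `a` has some `b` with `a·b = D(a)`. -/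
def DRegular : Prop := ∀ a, ∃ b, C.mul a b = some (C.D a)

/-- Normality: projections `e`, `f` with `e·f` and `f·e` both existing are equal. -/
def Normal : Prop := ∀ e f, C.IsProj e → C.IsProj f →
  (C.mul e f).isSome → (C.mul f e).isSome → e = f

/-- `t` is a D-inverse of `s`. -/
def IsDInv (s t : Q) : Prop := C.mul s t = some (C.D s) ∧ C.mul t s = some (C.D t)

/-- A D-inverse constellation: every element has a unique D-inverse. -/
def DInverse : Prop := ∀ s, ∃! t, C.IsDInv s t

/-- Right cancellativity. -/
def RightCancellative : Prop := ∀ a b c x, C.mul a c = some x → C.mul b c = some x → a = b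

end Constellation

/-- In a D-regular constellation, every idempotent is a right identity, and hence
`E(P) = RI(P) = D(P)`. -/
theorem dRegular_idem_is_rightId {Q : Type*} (C : Constellation Q) (h : C.DRegular) :
    (∀ e, C.Idem e → C.IsRightId e) ∧
    ({e | C.Idem e} = {e | C.IsRightId e}) ∧
    ({e | C.IsRightId e} = {e | C.IsProj e}) := by
  have key : ∀ e, C.Idem e → e = C.D e := by
    intro e he
    obtain ⟨b, hb⟩ := h e
    have h2 : (C.mul e (C.D e)).isSome := C.const2 e e b e (C.D e) he hb
    obtain ⟨t, ht⟩ := Option.isSome_iff_exists.mp h2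
    have ht' : t = e := C.D_ri e e t ht
    rw [ht'] at ht
    obtain ⟨u, hu1, hu2⟩ := C.const1 e e b (C.D e) e hb ht
    rw [he] at hu1
    have hue : e = u := by injection hu1
    rw [← hue] at hu2
    have : some (C.D e) = some e := hb.symm.trans hu2
    exact (Option.some.inj this).symm
  have ri_key : ∀ e, C.IsRightId e → e = C.D e := by
    intro e he
    exact he (C.D e) e (C.D_mul e)
  constructor
  · intro e he s t hst
    rw [key e he] at hst
    exact C.D_ri e s t hst
  constructor
  · ext e
    simp only [Set.mem_setOf_eq]
    constructor
    · intro he s t hst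
      rw [key e he] at hst
      exact C.D_ri e s t hst
    · intro he
      have h1 := ri_key e he
      have := C.D_mul e
      rw [← h1] at this
      exact this
  · ext e
    simp only [Set.mem_setOf_eq]
    constructor
    · intro he
      exact ⟨e, ri_key e he⟩
    · rintro ⟨s, rfl⟩
      intro a b hab
      exact C.D_ri s a b hab
end

section
/- Every D-regular constellation is right cancellative: if a·c = b·c (both existing), then a = b. -/
open scoped Classical

/-- Every D-regular constellation is right cancellative. -/
theorem dRegular_rightCancellative {Q : Type*} (C : Constellation Q) (h : C.DRegular) :
    C.RightCancellative := by
  intro a b c x hac hbc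
  obtain ⟨d, hd⟩ := h c
  -- a · D c exists
  have ha : (C.mul a (C.D c)).isSome := C.const2 a c d x (C.D c) hac hd
  obtain ⟨va, hva⟩ := Option.isSome_iff_exists.mp ha
  have hva' : va = a := C.D_ri c a va hva
  rw [hva'] at hva
  obtain ⟨u, hu1, hu2⟩ := C.const1 a c d (C.D c) a hd hva
  rw [hac] at hu1
  injection hu1 with hu1; subst hu1
  have hb : (C.mul b (C.D c)).isSome := C.const2 b c d x (C.D c) hbc hd
  obtain ⟨vb, hvb⟩ := Option.isSome_iff_exists.mp hb
  have hvb' : vb = b := C.D_ri c b vb hvb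
  rw [hvb'] at hvb
  obtain ⟨w, hw1, hw2⟩ := C.const1 b c d (C.D c) b hd hvb
  rw [hbc] at hw1
  injection hw1 with hw1; subst hw1
  rw [hu2] at hw2
  injection hw2
end

section
/- A small constellation P is normal and right cancellative if and only if it embeds (via a strong injective radiant) in the constellation I_P of injective partial functions on the set P, where s·t is the composite (first s, then t) defined exactly when Im(s) ⊆ Dom(t), and D(s) is the identity restricted to Dom(s). -/
open scoped Classical

/-- Injective partial functions on `X` (the carrier of the constellation `I_X`). -/
def PInj (X : Type*) := {f : X → Option X // ∀ a b c, f a = some c → f b = some c → a = b}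

/-- The product in `I_X`: `s·t` is the composite (first `s`, then `t`), defined exactly
when the image of `s` is contained in the domain of `t`. -/
noncomputable def PInj.mul {X : Type*} (s t : PInj X) : Option (PInj X) :=
  if h : ∀ a y, s.1 a = some y → (t.1 y).isSome
  then some ⟨fun a => (s.1 a).bind t.1, by
    intro a b c hac hbc
    rcases Option.bind_eq_some_iff.mp hac with ⟨y1, hy1, hy1'⟩
    rcases Option.bind_eq_some_iff.mp hbc with ⟨y2, hy2, hy2'⟩
    have hy : y1 = y2 := t.2 _ _ _ hy1' hy2'
    subst hy
    exact s.2 _ _ _ hy1 hy2⟩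
  else none

/-- The domain operation in `I_X`: the identity map restricted to the domain of `s`. -/
noncomputable def PInj.D {X : Type*} (s : PInj X) : PInj X :=
  ⟨fun a => if (s.1 a).isSome then some a else none, by
    intro a b c ha hb
    have h1 : a = c := by
      by_cases h : (s.1 a).isSome <;> simp [h] at ha
      exact ha
    have h2 : b = c := by
      by_cases h : (s.1 b).isSome <;> simp [h] at hb
      exact hb
    exact h1.trans h2.symm⟩

/-- The inverse of an injective partial function, as an injective partial function. -/
noncomputable def PInj.inv {X : Type*} (s : PInj X) : PInj X :=
  ⟨fun y => if h : ∃ a, s.1 a = some y then some h.choose else none, by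
    intro a b c ha hb
    have h1 : s.1 c = some a := by
      by_cases h : ∃ x, s.1 x = some a
      · simp [h] at ha; rw [← ha]; exact h.choose_spec
      · simp [h] at ha
    have h2 : s.1 c = some b := by
      by_cases h : ∃ x, s.1 x = some b
      · simp [h] at hb; rw [← hb]; exact h.choose_spec
      · simp [h] at hb
    rw [h1] at h2; exact Option.some_injective _ h2⟩

/-!
For a right cancellative constellation the right translations `a ↦ a·s` are injective partial
maps. They compose like the elements (Const1 and Const2), respect `D` because `a·D(s)` exists, and
then equals `a`, exactly when `a·s` exists, and form a strong radiant because the translation by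
`s` sends `D(s)` to `s`. Equal translations of `s` and `t` give `D(s)·t = s` and `D(t)·s = t`, so
`D(s)` and `D(t)` compose both ways and normality forces `s = t`. Conversely, `I_X` is itself
normal (its projections are determined by their domains) and right cancellative, and both
properties pull back along an injective radiant.
-/

namespace PInj
variable {X : Type*}

lemma ext {s t : PInj X} (h : ∀ a, s.1 a = t.1 a) : s = t :=
  Subtype.ext (funext h)

lemma D_apply (s : PInj X) (a : X) :
    (PInj.D s).1 a = if (s.1 a).isSome then some a else none :=
  rfl

lemma mul_isSome_iff {s t : PInj X} :
    (s.mul t).isSome ↔ ∀ a y, s.1 a = some y → (t.1 y).isSome := by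
  unfold PInj.mul
  split_ifs with h
  · exact iff_of_true rfl h
  · exact iff_of_false Bool.false_ne_true h

lemma mul_eq_some_of {s t u : PInj X} (hdom : ∀ a y, s.1 a = some y → (t.1 y).isSome)
    (hval : ∀ a, (s.1 a).bind t.1 = u.1 a) : s.mul t = some u := by
  unfold PInj.mul
  rw [dif_pos hdom]
  exact congrArg some (ext hval)

lemma mul_apply {s t u : PInj X} (h : s.mul t = some u) (a : X) :
    u.1 a = (s.1 a).bind t.1 := by
  unfold PInj.mul at h
  split_ifs at h
  cases h
  rfl

lemma isSome_of_mul_D_isSome {s t : PInj X} (h : (PInj.mul (D s) (D t)).isSome) {a : X}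
    (ha : (s.1 a).isSome) : (t.1 a).isSome := by
  have := mul_isSome_iff.mp h a a (by simp [D_apply, ha])
  by_contra hta
  simp [D_apply, hta] at this

lemma D_eq_D_of_mul_isSome {s t : PInj X} (hst : (PInj.mul (D s) (D t)).isSome)
    (hts : (PInj.mul (D t) (D s)).isSome) : D s = D t := by
  refine ext fun a => ?_
  by_cases ha : (s.1 a).isSome
  · simp [D_apply, ha, isSome_of_mul_D_isSome hst ha]
  · have hta : ¬ (t.1 a).isSome := fun h => ha (isSome_of_mul_D_isSome hts h)
    simp [D_apply, ha, hta]

lemma eq_of_mul_eq_some {s t u x : PInj X} (hs : s.mul u = some x) (ht : t.mul u = some x) :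
    s = t := by
  have hsu := mul_isSome_iff.mp (by rw [hs]; rfl)
  have htu := mul_isSome_iff.mp (by rw [ht]; rfl)
  have hbind : ∀ a, (s.1 a).bind u.1 = (t.1 a).bind u.1 := fun a => by
    rw [← mul_apply hs, ← mul_apply ht]
  refine ext fun a => ?_
  have ha := hbind a
  cases hsa : s.1 a with
  | none =>
    cases hta : t.1 a with
    | none => rfl
    | some y =>
      obtain ⟨w, hw⟩ := Option.isSome_iff_exists.mp (htu a y hta)
      simp [hsa, hta, hw] at ha
  | some y =>
    obtain ⟨w, hw⟩ := Option.isSome_iff_exists.mp (hsu a y hsa)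
    cases hta : t.1 a with
    | none => simp [hsa, hta, hw] at ha
    | some y' =>
      simp only [hsa, hta, Option.bind_some, hw] at ha
      rw [u.2 y y' w hw ha.symm]

end PInj

namespace Constellation
variable {Q : Type*} (C : Constellation Q)

lemma mul_mul_of_mul {a s t y u : Q} (hy : C.mul a s = some y) (hu : C.mul s t = some u) :
    ∃ w, C.mul a u = some w ∧ C.mul y t = some w := by
  obtain ⟨w, hw⟩ := Option.isSome_iff_exists.mp (C.const2 a s t y u hy hu)
  obtain ⟨y', hy', hy't⟩ := C.const1 a s t u w hu hw
  rw [hy] at hy'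
  exact ⟨w, hw, Option.some.inj hy' ▸ hy't⟩

lemma mul_D_eq (a s : Q) :
    C.mul a (C.D s) = if (C.mul a s).isSome then some a else none := by
  split_ifs with has
  · obtain ⟨y, hy⟩ := Option.isSome_iff_exists.mp has
    obtain ⟨u, hu, -⟩ := C.const1 a (C.D s) s s y (C.D_mul s) hy
    rwa [C.D_ri s a u hu] at hu
  · by_contra hne
    obtain ⟨w, hw⟩ := Option.ne_none_iff_exists'.mp hne
    obtain rfl := C.D_ri s a w hw
    exact has (C.const2 w (C.D s) s w s hw (C.D_mul s))

lemma eq_of_forall_mul_eq (hn : C.Normal) {s t : Q} (h : ∀ a, C.mul a s = C.mul a t) :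
    s = t := by
  have hs : C.mul (C.D s) t = some s := h (C.D s) ▸ C.D_mul s
  have ht : C.mul (C.D t) s = some t := (h (C.D t)).symm ▸ C.D_mul t
  obtain ⟨u, hu, -⟩ := C.const1 (C.D s) (C.D t) s t s ht hs
  obtain ⟨v, hv, -⟩ := C.const1 (C.D t) (C.D s) t s t hs ht
  have hD : C.D s = C.D t :=
    hn _ _ ⟨s, rfl⟩ ⟨t, rfl⟩ (by rw [hu]; rfl) (by rw [hv]; rfl)
  exact Option.some.inj (hs.symm.trans (hD ▸ C.D_mul t))

def rightMul (hrc : C.RightCancellative) (s : Q) : PInj Q :=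
  ⟨fun a => C.mul a s, fun a b c hac hbc => hrc a b s c hac hbc⟩

variable {C}
variable (hrc : C.RightCancellative)

lemma rightMul_injective (hn : C.Normal) : Function.Injective (C.rightMul hrc) :=
  fun _ _ h => C.eq_of_forall_mul_eq hn fun a => congrFun (congrArg Subtype.val h) a

lemma rightMul_mul {s t u : Q} (h : C.mul s t = some u) :
    PInj.mul (C.rightMul hrc s) (C.rightMul hrc t) = some (C.rightMul hrc u) := by
  refine PInj.mul_eq_some_of (fun a y hy => ?_) (fun a => ?_)
  · obtain ⟨w, -, hw⟩ := C.mul_mul_of_mul hy h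
    exact Option.isSome_iff_exists.mpr ⟨w, hw⟩
  · change (C.mul a s).bind (C.mul · t) = C.mul a u
    cases has : C.mul a s with
    | none =>
      by_contra hne
      obtain ⟨w, hw⟩ := Option.ne_none_iff_exists'.mp (Ne.symm hne)
      obtain ⟨y, hy, -⟩ := C.const1 a s t u w h hw
      simp [has] at hy
    | some y =>
      obtain ⟨w, hw, hyw⟩ := C.mul_mul_of_mul has h
      simp [hw, hyw]

lemma D_rightMul (s : Q) : PInj.D (C.rightMul hrc s) = C.rightMul hrc (C.D s) :=
  PInj.ext fun a => (C.mul_D_eq a s).symm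

lemma mul_isSome_of_rightMul {s t : Q}
    (h : (PInj.mul (C.rightMul hrc s) (C.rightMul hrc t)).isSome) : (C.mul s t).isSome :=
  PInj.mul_isSome_iff.mp h (C.D s) s (C.D_mul s)

variable {X : Type*} {ρ : Q → PInj X}

lemma normal_of_injective_radiant (hinj : Function.Injective ρ)
    (hmul : ∀ s t u, C.mul s t = some u → PInj.mul (ρ s) (ρ t) = some (ρ u))
    (hD : ∀ s, PInj.D (ρ s) = ρ (C.D s)) : C.Normal := by
  rintro _ _ ⟨s, rfl⟩ ⟨t, rfl⟩ hst hts
  obtain ⟨u, hu⟩ := Option.isSome_iff_exists.mp hst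
  obtain ⟨v, hv⟩ := Option.isSome_iff_exists.mp hts
  refine hinj ?_
  rw [← hD s, ← hD t]
  refine PInj.D_eq_D_of_mul_isSome ?_ ?_
  · rw [hD, hD, hmul _ _ _ hu]; rfl
  · rw [hD, hD, hmul _ _ _ hv]; rfl

lemma rightCancellative_of_injective_radiant (hinj : Function.Injective ρ)
    (hmul : ∀ s t u, C.mul s t = some u → PInj.mul (ρ s) (ρ t) = some (ρ u)) :
    C.RightCancellative :=
  fun _ _ _ _ hac hbc => hinj (PInj.eq_of_mul_eq_some (hmul _ _ _ hac) (hmul _ _ _ hbc))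

end Constellation

/-- A small constellation is normal and right cancellative iff it embeds (via a strong
injective radiant) in the constellation `I_P` of injective partial functions on `P`. -/
theorem normal_rightCancellative_iff_embeds_in_IP {P : Type*} (C : Constellation P) :
    (C.Normal ∧ C.RightCancellative) ↔
    ∃ ρ : P → PInj P, Function.Injective ρ ∧
      (∀ s t u, C.mul s t = some u → PInj.mul (ρ s) (ρ t) = some (ρ u)) ∧
      (∀ s, PInj.D (ρ s) = ρ (C.D s)) ∧
      (∀ s t, (PInj.mul (ρ s) (ρ t)).isSome → (C.mul s t).isSome) := by
  constructor
  · rintro ⟨hn, hrc⟩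
    exact ⟨C.rightMul hrc, Constellation.rightMul_injective hrc hn,
      fun _ _ _ => Constellation.rightMul_mul hrc, Constellation.D_rightMul hrc,
      fun _ _ => Constellation.mul_isSome_of_rightMul hrc⟩
  · rintro ⟨ρ, hinj, hmul, hD, -⟩
    exact ⟨Constellation.normal_of_injective_radiant hinj hmul hD,
      Constellation.rightCancellative_of_injective_radiant hinj hmul⟩
end

section
/- In a constellation Q, every projection e ∈ D(Q) is a D-inverse of itself; moreover, every element of Q has at most one D-inverse if and only if Q is normal. -/
open scoped Classical

/-- In a constellation, every projection is a D-inverse of itself, and D-inverses are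
unique (when they exist) if and only if the constellation is normal. -/
theorem proj_selfDInv_and_unique_iff_normal {Q : Type*} (C : Constellation Q) :
    (∀ e, C.IsProj e → C.IsDInv e e) ∧
    ((∀ s t u, C.IsDInv s t → C.IsDInv s u → t = u) ↔ C.Normal) := by
  -- D(s)·D(s) = D(s)
  have hDD : ∀ s : Q, C.mul (C.D s) (C.D s) = some (C.D s) := by
    intro s
    obtain ⟨u, hu1, hu2⟩ := C.const1 (C.D s) (C.D s) s s s (C.D_mul s) (C.D_mul s)
    have := C.D_ri s (C.D s) u hu1
    rwa [this] at hu1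
  -- D(D s) = D s
  have hDid : ∀ s : Q, C.D (C.D s) = C.D s := by
    intro s
    exact (C.D_unique (C.D s) (C.D s) (fun a b h => C.D_ri s a b h) (hDD s)).symm
  have hself : ∀ e, C.IsProj e → C.IsDInv e e := by
    rintro e ⟨s, rfl⟩
    constructor <;> · rw [hDid]; exact hDD s
  refine ⟨hself, ?_, ?_⟩
  · -- uniqueness → normal
    intro huniq e f he hf hef hfe
    obtain ⟨x, hx⟩ := Option.isSome_iff_exists.mp hef
    obtain ⟨y, hy⟩ := Option.isSome_iff_exists.mp hfe
    obtain ⟨a, rfl⟩ := he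
    obtain ⟨b, rfl⟩ := hf
    have hx' : x = C.D a := C.D_ri b _ _ hx
    have hy' : y = C.D b := C.D_ri a _ _ hy
    subst hx'; subst hy'
    -- f is a D-inverse of e
    have h1 : C.IsDInv (C.D a) (C.D b) := by
      refine ⟨?_, ?_⟩
      · rw [hDid]; exact hx
      · rw [hDid]; exact hy
    exact (huniq (C.D a) (C.D a) (C.D b) (hself _ ⟨a, rfl⟩) h1).symm ▸
      huniq (C.D a) (C.D a) (C.D b) (hself _ ⟨a, rfl⟩) h1
  · -- normal → uniqueness
    intro hnorm s t u ⟨hst, hts⟩ ⟨hsu, hus⟩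
    -- t·(D s) = t : from const2 with t·s = D t, s·u = D s... use const2 x=t y=s z=u
    have htDs : C.mul t (C.D s) = some t := by
      have h := C.const2 t s u (C.D t) (C.D s) hts hsu
      obtain ⟨w, hw⟩ := Option.isSome_iff_exists.mp h
      rw [hw, C.D_ri s t w hw]
    have huDs : C.mul u (C.D s) = some u := by
      have h := C.const2 u s t (C.D u) (C.D s) hus hst
      obtain ⟨w, hw⟩ := Option.isSome_iff_exists.mp h
      rw [hw, C.D_ri s u w hw]
    -- (D t)·u = t
    have hDtu : C.mul (C.D t) u = some t := by
      obtain ⟨q, hq1, hq2⟩ := C.const1 t s u (C.D s) t hsu htDs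
      rw [hts] at hq1
      rwa [← Option.some.inj hq1] at hq2
    have hDut : C.mul (C.D u) t = some u := by
      obtain ⟨q, hq1, hq2⟩ := C.const1 u s t (C.D s) u hst huDs
      rw [hus] at hq1
      rwa [← Option.some.inj hq1] at hq2
    -- (D t)·(D u) exists
    have h1 : (C.mul (C.D t) (C.D u)).isSome := by
      obtain ⟨q, hq1, hq2⟩ := C.const1 (C.D t) (C.D u) t u t hDut hDtu
      rw [hq1]; rfl
    have h2 : (C.mul (C.D u) (C.D t)).isSome := by
      obtain ⟨q, hq1, hq2⟩ := C.const1 (C.D u) (C.D t) u t u hDtu hDut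
      rw [hq1]; rfl
    have hDtDu : C.D t = C.D u := hnorm _ _ ⟨t, rfl⟩ ⟨u, rfl⟩ h1 h2
    have := hDtu
    rw [hDtDu, C.D_mul u] at this
    exact (Option.some.inj this).symm
end

section
/- If ρ: P → Q is a surjective radiant from a D-inverse constellation P to a normal constellation Q, then Q is a D-inverse constellation with (sρ)' = s'ρ for all s ∈ P. -/
open scoped Classical

namespace Constellation
variable {Q : Type*} (C : Constellation Q)

/-- `D(s)` absorbs: if `s·t = u` then `D(u) = D(s)`. -/
lemma D_eq_of_mul {s t u : Q} (h : C.mul s t = some u) : C.D s = C.D u := by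
  have h1 : C.mul (C.D s) s = some s := C.D_mul s
  have h2 : (C.mul (C.D s) u).isSome := C.const2 _ _ _ _ _ h1 h
  obtain ⟨v, hv⟩ := Option.isSome_iff_exists.mp h2
  obtain ⟨a, ha1, ha2⟩ := C.const1 _ _ _ _ _ h hv
  rw [h1] at ha1
  cases ha1
  rw [h] at ha2
  cases ha2
  exact C.D_unique _ _ (fun p q hpq => C.D_ri s p q hpq) hv

/-- Uniqueness of D-inverses in a normal constellation. -/
lemma dInv_unique (hnorm : C.Normal) {s t u : Q}
    (ht : C.IsDInv s t) (hu : C.IsDInv s u) : t = u := by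
  obtain ⟨ht1, ht2⟩ := ht
  obtain ⟨hu1, hu2⟩ := hu
  -- t·D(s) = t
  have htDs : (C.mul t (C.D s)).isSome := C.const2 _ _ _ _ _ ht2 ht1
  obtain ⟨w, hw⟩ := Option.isSome_iff_exists.mp htDs
  rw [C.D_ri s t w hw] at hw
  -- from t·(s·u) : D(t)·u = t
  have hDtu : C.mul (C.D t) u = some t := by
    obtain ⟨a, ha1, ha2⟩ := C.const1 _ _ _ _ _ hu1 hw
    rw [ht2] at ha1; cases ha1; exact ha2
  -- symmetric: u·D(s) = u, D(u)·t = u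
  have huDs : (C.mul u (C.D s)).isSome := C.const2 _ _ _ _ _ hu2 hu1
  obtain ⟨w', hw'⟩ := Option.isSome_iff_exists.mp huDs
  rw [C.D_ri s u w' hw'] at hw' 
  have hDut : C.mul (C.D u) t = some u := by
    obtain ⟨a, ha1, ha2⟩ := C.const1 _ _ _ _ _ ht1 hw'
    rw [hu2] at ha1; cases ha1; exact ha2
  -- D(t)·D(u) and D(u)·D(t) exist
  have e1 : (C.mul (C.D t) (C.D u)).isSome := C.const2 _ _ _ _ _ hDtu hu2
  have e2 : (C.mul (C.D u) (C.D t)).isSome := C.const2 _ _ _ _ _ hDut ht2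
  have hDD : C.D t = C.D u := hnorm _ _ ⟨t, rfl⟩ ⟨u, rfl⟩ e1 e2
  -- conclude
  have : C.mul (C.D u) t = some t := by rw [← hDD]; exact C.D_mul t
  rw [hDut] at this
  exact ((Option.some.injEq _ _).mp this).symm

end Constellation

/-- If `ρ : P → Q` is a surjective radiant, `P` is D-inverse and `Q` is normal, then
`Q` is D-inverse and `(sρ)' = s'ρ`. -/
theorem dInverse_of_surjective_radiant {P Q : Type*}
    (Cp : Constellation P) (Cq : Constellation Q) (ρ : P → Q)
    (hrad : ∀ s t u, Cp.mul s t = some u → Cq.mul (ρ s) (ρ t) = some (ρ u))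
    (hD : ∀ s, Cq.D (ρ s) = ρ (Cp.D s))
    (hsurj : Function.Surjective ρ)
    (hinv : Cp.DInverse) (hnorm : Cq.Normal) :
    Cq.DInverse ∧ ∀ s t, Cp.IsDInv s t → Cq.IsDInv (ρ s) (ρ t) := by
  have key : ∀ s t, Cp.IsDInv s t → Cq.IsDInv (ρ s) (ρ t) := by
    rintro s t ⟨h1, h2⟩
    constructor
    · rw [hD]; exact hrad _ _ _ h1
    · rw [hD]; exact hrad _ _ _ h2
  refine ⟨fun q => ?_, key⟩
  obtain ⟨s, rfl⟩ := hsurj q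
  obtain ⟨t, ht, -⟩ := hinv s
  exact ⟨ρ t, key s t ht, fun y hy => Cq.dInv_unique hnorm hy (key s t ht)⟩
end

section
/- If S is an inverse semigroup, then defining s·t = st exactly when stt' = s, and D(s) = ss', makes S into a D-inverse constellation in which the D-inverse of s is its semigroup inverse s'. -/
open scoped Classical

section InvSgp
variable {S : Type*} [Semigroup S]

lemma ISG.inv_inv (inv : S → S)
    (h1 : ∀ a, a * inv a * a = a) (h2 : ∀ a, inv a * a * inv a = inv a)
    (huniq : ∀ a b : S, a * b * a = a → b * a * b = b → b = inv a) : ∀ a, inv (inv a) = a := fun a => (huniq (inv a) a (h2 a) (h1 a)).symm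

lemma ISG.inv_of_idem (inv : S → S)
    (h1 : ∀ a, a * inv a * a = a) (h2 : ∀ a, inv a * a * inv a = inv a)
    (huniq : ∀ a b : S, a * b * a = a → b * a * b = b → b = inv a) (e : S) (he : e * e = e) : inv e = e :=
  (huniq e e (by rw [he, he]) (by rw [he, he])).symm

/-- product of idempotents is idempotent -/
lemma ISG.idem_mul (inv : S → S)
    (h1 : ∀ a, a * inv a * a = a) (h2 : ∀ a, inv a * a * inv a = inv a)
    (huniq : ∀ a b : S, a * b * a = a → b * a * b = b → b = inv a) (e f : S) (he : e * e = e) (hf : f * f = f) : (e*f)*(e*f) = e*f := by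
  set x := inv (e*f) with hx
  have h1' : e*(f*(x*(e*f))) = e*f := by simpa only [mul_assoc] using h1 (e*f)
  have h2' : x*(e*(f*x)) = x := by simpa only [mul_assoc] using h2 (e*f)
  have hA : (e*f) * (f*x*e) * (e*f) = e*f := by
    calc (e*f) * (f*x*e) * (e*f) = e*((f*f)*(x*((e*e)*f))) := by simp only [mul_assoc]
      _ = e*(f*(x*(e*f))) := by rw [hf, he]
      _ = e*f := h1'
  have hB : (f*x*e) * (e*f) * (f*x*e) = f*x*e := by
    calc (f*x*e) * (e*f) * (f*x*e) = f*(x*((e*e)*((f*f)*(x*e)))) := by simp only [mul_assoc]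
      _ = f*((x*(e*(f*x)))*e) := by rw [he, hf]; simp only [mul_assoc]
      _ = f*x*e := by rw [h2']; simp only [mul_assoc]
  have hxe : f*x*e = x := huniq _ _ hA hB
  have hxf : f*x = x := by
    conv_lhs => rw [← hxe]
    calc f*(f*x*e) = (f*f)*(x*e) := by simp only [mul_assoc]
      _ = f*x*e := by rw [hf]; simp only [mul_assoc]
      _ = x := hxe
  have hex : x*e = x := by
    conv_lhs => rw [← hxe]
    calc (f*x*e)*e = f*(x*(e*e)) := by simp only [mul_assoc]
      _ = f*x*e := by rw [he]; simp only [mul_assoc]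
      _ = x := hxe
  have hxx : x*x = x := by
    calc x*x = (f*x*e)*(f*x*e) := by rw [hxe]
      _ = f*(x*(e*(f*(x*e)))) := by simp only [mul_assoc]
      _ = f*(x*(e*(f*x))) := by rw [hex]
      _ = f*x := by rw [h2']
      _ = x := hxf
  have : x = e*f := by
    conv_lhs => rw [← ISG.inv_of_idem inv h1 h2 huniq x hxx, hx]
    exact ISG.inv_inv inv h1 h2 huniq (e*f)
  rw [← this]; exact hxx

/-- idempotents commute -/
lemma ISG.idem_comm (inv : S → S)
    (h1 : ∀ a, a * inv a * a = a) (h2 : ∀ a, inv a * a * inv a = inv a)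
    (huniq : ∀ a b : S, a * b * a = a → b * a * b = b → b = inv a) (e f : S) (he : e * e = e) (hf : f * f = f) : e*f = f*e := by
  have hef := ISG.idem_mul inv h1 h2 huniq e f he hf
  have hfe := ISG.idem_mul inv h1 h2 huniq f e hf he
  have hef' : e*(f*(e*f)) = e*f := by simpa only [mul_assoc] using hef
  have hfe' : f*(e*(f*e)) = f*e := by simpa only [mul_assoc] using hfe
  have hA : (e*f)*(f*e)*(e*f) = e*f := by
    calc (e*f)*(f*e)*(e*f) = e*((f*f)*((e*e)*f)) := by simp only [mul_assoc]
      _ = e*(f*(e*f)) := by rw [hf, he]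
      _ = e*f := hef'
  have hB : (f*e)*(e*f)*(f*e) = f*e := by
    calc (f*e)*(e*f)*(f*e) = f*((e*e)*((f*f)*e)) := by simp only [mul_assoc]
      _ = f*(e*(f*e)) := by rw [he, hf]
      _ = f*e := hfe'
  have := huniq (e*f) (f*e) hA hB
  rw [this, ISG.inv_of_idem inv h1 h2 huniq _ hef]

lemma ISG.idem_right (inv : S → S)
    (h1 : ∀ a, a * inv a * a = a) (h2 : ∀ a, inv a * a * inv a = inv a)
    (huniq : ∀ a b : S, a * b * a = a → b * a * b = b → b = inv a) (a : S) : (a*inv a)*(a*inv a) = a*inv a := by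
  calc (a*inv a)*(a*inv a) = a*(inv a*a*inv a) := by simp only [mul_assoc]
    _ = a*inv a := by rw [h2]

lemma ISG.idem_left (inv : S → S)
    (h1 : ∀ a, a * inv a * a = a) (h2 : ∀ a, inv a * a * inv a = inv a)
    (huniq : ∀ a b : S, a * b * a = a → b * a * b = b → b = inv a) (a : S) : (inv a*a)*(inv a*a) = inv a*a := by
  calc (inv a*a)*(inv a*a) = inv a*(a*inv a*a) := by simp only [mul_assoc]
    _ = inv a*a := by rw [h1]

lemma ISG.inv_mul (inv : S → S)
    (h1 : ∀ a, a * inv a * a = a) (h2 : ∀ a, inv a * a * inv a = inv a)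
    (huniq : ∀ a b : S, a * b * a = a → b * a * b = b → b = inv a) (a b : S) : inv (a*b) = inv b * inv a := by
  have hcomm := ISG.idem_comm inv h1 h2 huniq (b*inv b) (inv a*a)
    (ISG.idem_right inv h1 h2 huniq b) (ISG.idem_left inv h1 h2 huniq a)
  have hA : (a*b)*(inv b*inv a)*(a*b) = a*b := by
    calc (a*b)*(inv b*inv a)*(a*b) = a*((b*inv b)*((inv a*a)*b)) := by simp only [mul_assoc]
      _ = a*((b*inv b)*(inv a*a))*b := by simp only [mul_assoc]
      _ = a*((inv a*a)*(b*inv b))*b := by rw [hcomm]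
      _ = (a*inv a*a)*((b*inv b)*b) := by simp only [mul_assoc]
      _ = a*(b*inv b*b) := by rw [h1]
      _ = a*b := by rw [h1]
  have hB : (inv b*inv a)*(a*b)*(inv b*inv a) = inv b*inv a := by
    calc (inv b*inv a)*(a*b)*(inv b*inv a) = inv b*((inv a*a)*((b*inv b)*inv a)) := by
          simp only [mul_assoc]
      _ = inv b*((inv a*a)*(b*inv b))*inv a := by simp only [mul_assoc]
      _ = inv b*((b*inv b)*(inv a*a))*inv a := by rw [← hcomm]
      _ = (inv b*b*inv b)*((inv a*a)*inv a) := by simp only [mul_assoc]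
      _ = inv b*(inv a*a*inv a) := by rw [h2]
      _ = inv b*inv a := by rw [h2]
  exact (huniq _ _ hA hB).symm

end InvSgp


section Construction
variable {S : Type*} [Semigroup S]

/-- The constellation built from an inverse semigroup. -/
noncomputable def ISG.C (inv : S → S)
    (h1 : ∀ a, a * inv a * a = a) (h2 : ∀ a, inv a * a * inv a = inv a)
    (huniq : ∀ a b : S, a * b * a = a → b * a * b = b → b = inv a) : Constellation S where
  mul s t := if s * t * inv t = s then some (s * t) else none
  D s := s * inv s
  const1 := by
    intro x y z w v hyz hxw
    split_ifs at hyz hxw with hPyz hPxw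
    have hw : w = y * z := (Option.some.inj hyz).symm
    have hv : v = x * w := (Option.some.inj hxw).symm
    subst hw hv
    have hinv : inv (y*z) = inv z * inv y := ISG.inv_mul inv h1 h2 huniq y z
    have htail : ∀ u : S, y*(z*(inv z * u)) = y * u := by
      intro u
      calc y*(z*(inv z * u)) = (y*z*inv z)*u := by simp only [mul_assoc]
        _ = y*u := by rw [hPyz]
    have hPxy : x * y * inv y = x := by
      calc x * y * inv y = x*(y*(z*(inv z * inv y))) := by
            rw [htail (inv y)]; simp only [mul_assoc]
        _ = x*(y*z)*inv (y*z) := by rw [hinv]; simp only [mul_assoc]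
        _ = x := hPxw
    refine ⟨x*y, if_pos hPxy, ?_⟩
    have hc : (x*y)*z*inv z = x*y := by
      calc (x*y)*z*inv z = x*(y*z*inv z) := by simp only [mul_assoc]
        _ = x*y := by rw [hPyz]
    rw [if_pos hc]
    exact congrArg some (mul_assoc x y z)
  const2 := by
    intro x y z u v hxy hyz
    split_ifs at hxy hyz with hPxy hPyz
    have hv : v = y * z := (Option.some.inj hyz).symm
    subst hv
    have hinv : inv (y*z) = inv z * inv y := ISG.inv_mul inv h1 h2 huniq y z
    have hc : x*(y*z)*inv (y*z) = x := by
      calc x*(y*z)*inv (y*z) = x*((y*z*inv z)*inv y) := by rw [hinv]; simp only [mul_assoc]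
        _ = x*(y*inv y) := by rw [hPyz]
        _ = x := by rw [← mul_assoc]; exact hPxy
    rw [if_pos hc]; rfl
  D_mul := by
    intro x
    have hc : (x*inv x)*x*inv x = x*inv x := by rw [h1]
    rw [if_pos hc, h1]
  D_ri := by
    intro x s t h
    have he : (x*inv x)*(x*inv x) = x*inv x := ISG.idem_right inv h1 h2 huniq x
    have hie : inv (x*inv x) = x*inv x := ISG.inv_of_idem inv h1 h2 huniq _ he
    split_ifs at h with hc
    have ht : t = s*(x*inv x) := (Option.some.inj h).symm
    rw [hie] at hc
    rw [ht]
    calc s*(x*inv x) = s*((x*inv x)*(x*inv x)) := by rw [he]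
      _ = s*(x*inv x)*(x*inv x) := by simp only [mul_assoc]
      _ = s := hc
  D_unique := by
    intro x e _ h
    split_ifs at h with hc
    have hex : e * x = x := Option.some.inj h
    calc e = e*x*inv x := hc.symm
      _ = x * inv x := by rw [hex]

lemma ISG.C_mul_eq (inv : S → S)
    (h1 : ∀ a, a * inv a * a = a) (h2 : ∀ a, inv a * a * inv a = inv a)
    (huniq : ∀ a b : S, a * b * a = a → b * a * b = b → b = inv a) (s t : S) :
    (ISG.C inv h1 h2 huniq).mul s t = if s * t * inv t = s then some (s * t) else none := rfl

lemma ISG.isDInv_inv (inv : S → S)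
    (h1 : ∀ a, a * inv a * a = a) (h2 : ∀ a, inv a * a * inv a = inv a)
    (huniq : ∀ a b : S, a * b * a = a → b * a * b = b → b = inv a) (s : S) :
    (ISG.C inv h1 h2 huniq).IsDInv s (inv s) := by
  have hii := ISG.inv_inv inv h1 h2 huniq
  constructor
  · show (if s * inv s * inv (inv s) = s then some (s * inv s) else none) = _
    rw [if_pos (by rw [hii]; exact h1 s)]
    rfl
  · show (if inv s * s * inv s = inv s then some (inv s * s) else none) = _
    rw [if_pos (h2 s)]
    show _ = some (inv s * inv (inv s))
    rw [hii]

end Construction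

/-- An inverse semigroup becomes a D-inverse constellation by defining `s·t = st`
exactly when `s t t' = s`, with `D(s) = s s'`, and the D-inverse of `s` is `s'`. -/
theorem inverseSemigroup_to_dInverseConstellation {S : Type*} [Semigroup S] (inv : S → S)
    (h1 : ∀ a, a * inv a * a = a) (h2 : ∀ a, inv a * a * inv a = inv a)
    (huniq : ∀ a b, a * b * a = a → b * a * b = b → b = inv a) :
    ∃ C : Constellation S,
      (∀ s t, s * t * inv t = s → C.mul s t = some (s * t)) ∧
      (∀ s t, s * t * inv t ≠ s → C.mul s t = none) ∧
      (∀ s, C.D s = s * inv s) ∧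
      C.DInverse ∧
      (∀ s, C.IsDInv s (inv s)) := by
  classical
  have hii := ISG.inv_inv inv h1 h2 huniq
  refine ⟨ISG.C inv h1 h2 huniq, fun s t h => if_pos h, fun s t h => if_neg h, fun s => rfl,
    ?_, ?_⟩
  · intro s
    refine ⟨inv s, ISG.isDInv_inv inv h1 h2 huniq s, ?_⟩
    intro t ⟨ha, hb⟩
    rw [ISG.C_mul_eq] at ha hb
    split_ifs at ha hb with hc1 hc2
    have e1 : s * t = s * inv s := Option.some.inj ha
    have e2 : t * s = t * inv t := Option.some.inj hb
    exact huniq s t (by rw [e1, h1]) (by rw [e2, h1])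
  · exact ISG.isDInv_inv inv h1 h2 huniq
end

section
/- In a D-inverse constellation Q, if both s·t and t'·s' exist (where s', t' denote D-inverses), then (s·t)' = t'·s'. -/
open scoped Classical

/-- If `s·t = u` then `D(u) = D(s)`. -/
lemma D_of_mul {Q : Type*} (C : Constellation Q) {s t u : Q}
    (hst : C.mul s t = some u) : C.D u = C.D s := by
  have h1 : C.mul (C.D s) s = some s := C.D_mul s
  have h2 : (C.mul (C.D s) u).isSome := C.const2 _ _ _ _ _ h1 hst
  obtain ⟨w, hw⟩ := Option.isSome_iff_exists.mp h2
  obtain ⟨u', hu1, hu2⟩ := C.const1 _ _ _ _ _ hst hw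
  rw [h1] at hu1
  rw [← Option.some_inj.mp hu1] at hu2
  rw [hst] at hu2
  rw [← Option.some_inj.mp hu2] at hw
  exact (C.D_unique u (C.D s) (fun a b hab => C.D_ri s a b hab) hw).symm

/-- In a D-inverse constellation, if `s·t` and `t'·s'` both exist then `(s·t)' = t'·s'`,
i.e. `t'·s'` is the D-inverse of `s·t`. -/
theorem dInv_of_product {Q : Type*} (C : Constellation Q) (h : C.DInverse)
    (s t s' t' u v : Q)
    (hs : C.IsDInv s s') (ht : C.IsDInv t t')
    (hst : C.mul s t = some u) (hts : C.mul t' s' = some v) :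
    C.IsDInv u v := by
  obtain ⟨hss', hs's⟩ := hs
  obtain ⟨htt', ht't⟩ := ht
  -- u·t' = s
  have hsd : (C.mul s (C.D t)).isSome := C.const2 _ _ _ _ _ hst htt'
  obtain ⟨w1, hw1⟩ := Option.isSome_iff_exists.mp hsd
  rw [C.D_ri t s w1 hw1] at hw1
  obtain ⟨u1, hu1, hu1'⟩ := C.const1 _ _ _ _ _ htt' hw1
  rw [hst] at hu1
  rw [← Option.some_inj.mp hu1] at hu1'
  -- now hu1' : C.mul u t' = some s
  -- u·v = D(s)
  have huv : (C.mul u v).isSome := C.const2 _ _ _ _ _ hu1' hts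
  obtain ⟨w2, hw2⟩ := Option.isSome_iff_exists.mp huv
  obtain ⟨u2, hu2, hu2'⟩ := C.const1 _ _ _ _ _ hts hw2
  rw [hu1'] at hu2
  rw [← Option.some_inj.mp hu2, hss'] at hu2'
  rw [← Option.some_inj.mp hu2'] at hw2
  -- hw2 : C.mul u v = some (C.D s)
  -- v·s = t'
  have hvd : (C.mul t' (C.D s')).isSome := C.const2 _ _ _ _ _ hts hs's
  obtain ⟨w3, hw3⟩ := Option.isSome_iff_exists.mp hvd
  rw [C.D_ri s' t' w3 hw3] at hw3
  obtain ⟨u3, hu3, hu3'⟩ := C.const1 _ _ _ _ _ hs's hw3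
  rw [hts] at hu3
  rw [← Option.some_inj.mp hu3] at hu3'
  -- hu3' : C.mul v s = some t'
  -- v·u = D(t')
  have hvu : (C.mul v u).isSome := C.const2 _ _ _ _ _ hu3' hst
  obtain ⟨w4, hw4⟩ := Option.isSome_iff_exists.mp hvu
  obtain ⟨u4, hu4, hu4'⟩ := C.const1 _ _ _ _ _ hst hw4
  rw [hu3'] at hu4
  rw [← Option.some_inj.mp hu4, ht't] at hu4'
  rw [← Option.some_inj.mp hu4'] at hw4
  constructor
  · rw [hw2, D_of_mul C hst]
  · rw [hw4, D_of_mul C hts]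
end

section
/- Every D-inverse constellation Q is a constellation with range, with R(s) = s'·s = D(s') for all s; moreover Q is right cancellative and left cancellative as a constellation with range. -/
open scoped Classical

/-- `e ∈ s_D`: `e` is a projection, `s·e` exists, and `e ≤ f` (i.e. `e·f` exists)
for every projection `f` such that `s·f` exists. -/
def Constellation.InSD {Q : Type*} (C : Constellation Q) (s e : Q) : Prop :=
  C.IsProj e ∧ (C.mul s e).isSome ∧
    ∀ f, C.IsProj f → (C.mul s f).isSome → (C.mul e f).isSome

namespace Constellation
variable {Q : Type*} (C : Constellation Q)

/-- Associativity helper: if `x·y` and `y·z` exist, then `x·(y·z)` and `(x·y)·z`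
exist and agree. -/
lemma assoc' {x y z u v : Q} (hxy : C.mul x y = some u) (hyz : C.mul y z = some v) :
    ∃ w, C.mul x v = some w ∧ C.mul u z = some w := by
  obtain ⟨w, hw⟩ := Option.isSome_iff_exists.mp (C.const2 x y z u v hxy hyz)
  obtain ⟨u', hu', huz⟩ := C.const1 x y z v w hyz hw
  rw [hxy] at hu'
  exact ⟨w, hw, (Option.some_injective _ hu') ▸ huz⟩

lemma idem_D (s : Q) : C.mul (C.D s) (C.D s) = some (C.D s) := by
  obtain ⟨u, hu, -⟩ := C.const1 (C.D s) (C.D s) s s s (C.D_mul s) (C.D_mul s)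
  rwa [C.D_ri s _ _ hu] at hu

lemma D_proj (s : Q) : C.D (C.D s) = C.D s :=
  (C.D_unique (C.D s) (C.D s) (C.D_ri s) (C.idem_D s)).symm

lemma proj_ri {e : Q} (he : C.IsProj e) : ∀ s t, C.mul s e = some t → t = s := by
  obtain ⟨g, rfl⟩ := he; exact C.D_ri g

lemma proj_D_eq {e : Q} (he : C.IsProj e) : C.D e = e := by
  obtain ⟨g, rfl⟩ := he; exact C.D_proj g

lemma proj_idem {e : Q} (he : C.IsProj e) : C.mul e e = some e := by
  obtain ⟨g, rfl⟩ := he; exact C.idem_D g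

lemma normal {inv : Q → Q} (huniq : ∀ s t, C.IsDInv s t → t = inv s)
    {e f : Q} (he : C.IsProj e) (hf : C.IsProj f)
    (hef : (C.mul e f).isSome) (hfe : (C.mul f e).isSome) : e = f := by
  obtain ⟨a, ha⟩ := Option.isSome_iff_exists.mp hef
  obtain ⟨b, hb⟩ := Option.isSome_iff_exists.mp hfe
  have ha' : C.mul e f = some e := by rw [ha, C.proj_ri hf _ _ ha]
  have hb' : C.mul f e = some f := by rw [hb, C.proj_ri he _ _ hb]
  have hee : C.IsDInv e e := by
    constructor <;> rw [C.proj_D_eq he] <;> exact C.proj_idem he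
  have hef' : C.IsDInv e f := by
    constructor
    · rw [C.proj_D_eq he]; exact ha'
    · rw [C.proj_D_eq hf]; exact hb'
  exact (huniq e e hee).trans (huniq e f hef').symm

end Constellation

/-- Every D-inverse constellation is a constellation with range, where
`R(s) = s'·s = D(s')`; moreover it is right cancellative, and left cancellative as a
constellation with range. -/
theorem dInverse_is_constellation_with_range {Q : Type*} (C : Constellation Q)
    (inv : Q → Q) (hinv : ∀ s, C.IsDInv s (inv s))
    (huniq : ∀ s t, C.IsDInv s t → t = inv s) :
    (∀ s, C.mul (inv s) s = some (C.D (inv s))) ∧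
    (∀ s, {e | C.InSD s e} = {C.D (inv s)}) ∧
    (∀ s t u, C.mul s t = some u → (C.mul (C.D (inv s)) t).isSome) ∧
    (∀ s t u w, C.mul s t = some u → C.mul (C.D (inv s)) t = some w →
      C.D (inv u) = C.D (inv w)) ∧
    C.RightCancellative ∧
    (∀ a b c x, C.mul a b = some x → C.mul a c = some x →
      ∃ y, C.mul (C.D (inv a)) b = some y ∧ C.mul (C.D (inv a)) c = some y) := by
  have hsi : ∀ s, C.mul s (inv s) = some (C.D s) := fun s => (hinv s).1
  have his : ∀ s, C.mul (inv s) s = some (C.D (inv s)) := fun s => (hinv s).2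
  -- s · D(inv s) = s
  have hsD : ∀ s, C.mul s (C.D (inv s)) = some s := by
    intro s
    obtain ⟨w, hw, hw'⟩ := C.assoc' (hsi s) (his s)
    rw [C.D_mul s] at hw'
    rw [hw, ← Option.some_injective _ hw']
  -- minimality of D(inv s): if s·f exists then D(inv s)·f exists
  have hmin : ∀ s f t, C.mul s f = some t → (C.mul (C.D (inv s)) f).isSome := by
    intro s f t hsf
    obtain ⟨w, -, hw'⟩ := C.assoc' (his s) hsf
    rw [hw']; rfl
  have hInSD : ∀ s, C.InSD s (C.D (inv s)) := by
    intro s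
    refine ⟨⟨inv s, rfl⟩, by rw [hsD s]; rfl, fun f _ hsf => ?_⟩
    obtain ⟨t, ht⟩ := Option.isSome_iff_exists.mp hsf
    exact hmin s f t ht
  have hSD_unique : ∀ s e, C.InSD s e → e = C.D (inv s) := by
    intro s e ⟨he, hse, hmin'⟩
    have h1 : (C.mul e (C.D (inv s))).isSome :=
      hmin' _ ⟨inv s, rfl⟩ (by rw [hsD s]; rfl)
    obtain ⟨t, ht⟩ := Option.isSome_iff_exists.mp hse
    have h2 : (C.mul (C.D (inv s)) e).isSome := hmin s e t ht
    exact C.normal huniq he ⟨inv s, rfl⟩ h1 h2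
  -- part 3 (with value): s·t = u → D(inv s)·t = inv s · u
  have hpart3 : ∀ s t u, C.mul s t = some u →
      ∃ w, C.mul (C.D (inv s)) t = some w ∧ C.mul (inv s) u = some w := by
    intro s t u hst
    obtain ⟨w, hw, hw'⟩ := C.assoc' (his s) hst
    exact ⟨w, hw', hw⟩
  refine ⟨his, ?_, ?_, ?_, ?_, ?_⟩
  · -- part 2
    intro s
    ext e
    simp only [Set.mem_setOf_eq, Set.mem_singleton_iff]
    exact ⟨hSD_unique s e, fun h => h ▸ hInSD s⟩
  · -- part 3
    intro s t u hst
    obtain ⟨w, hw, -⟩ := hpart3 s t u hst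
    rw [hw]; rfl
  · -- part 4: range congruence
    intro s t u w hst hDt
    obtain ⟨w', hw', hiw⟩ := hpart3 s t u hst
    rw [hDt] at hw'
    obtain rfl : w = w' := Option.some_injective _ hw'
    -- s · w = u
    have hDsu : C.mul (C.D s) u = some u := by
      obtain ⟨v, hv, hv'⟩ := C.assoc' (C.D_mul s) hst
      rw [hst] at hv'
      rw [hv, Option.some_injective _ hv']
    have hsw : C.mul s w = some u := by
      obtain ⟨v, hv, hv'⟩ := C.assoc' (hsi s) hiw
      rw [hDsu] at hv'
      rw [hv, ← Option.some_injective _ hv']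
    -- D(inv w) ∈ u_D
    have : C.InSD u (C.D (inv w)) := by
      refine ⟨⟨inv w, rfl⟩, ?_, fun f hf huf => ?_⟩
      · obtain ⟨v, hv, hv'⟩ := C.assoc' hsw (hsD w)
        rw [hsw] at hv
        rw [hv']; rfl
      · obtain ⟨r, hr⟩ := Option.isSome_iff_exists.mp huf
        obtain ⟨v, -, hv'⟩ := C.assoc' hiw hr
        exact hmin w f v hv'
    exact (hSD_unique u _ this).symm
  · -- right cancellative
    intro a b c x hac hbc
    have ha : C.mul x (inv c) = some a := by
      obtain ⟨v, hv, hv'⟩ := C.assoc' hac (hsi c)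
      rw [C.D_ri c _ _ hv] at hv'
      exact hv'
    have hb : C.mul x (inv c) = some b := by
      obtain ⟨v, hv, hv'⟩ := C.assoc' hbc (hsi c)
      rw [C.D_ri c _ _ hv] at hv'
      exact hv'
    exact Option.some_injective _ (ha.symm.trans hb)
  · -- left cancellative
    intro a b c x hab hac
    obtain ⟨w, hw, hiw⟩ := hpart3 a b x hab
    obtain ⟨w', hw', hiw'⟩ := hpart3 a c x hac
    obtain rfl : w = w' := Option.some_injective _ (hiw.symm.trans hiw')
    exact ⟨w, hw, hw'⟩
end

section
/- Every D-inverse constellation, viewed as a constellation with range via R(s) = s'·s, is strongly right cancellative: it is right cancellative and, for projections e, f and any s, R(e·s) = R(f·s) implies e = f. -/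
open scoped Classical

namespace Constellation

variable {Q : Type*} (C : Constellation Q)

/-- `D(D x) = D x`. -/
lemma aux_D_D (x : Q) : C.D (C.D x) = C.D x :=
  (C.D_ri x _ _ (C.D_mul (C.D x))).symm

/-- If `a·b = c` then `D c = D a`. -/
lemma aux_D_of_mul {a b c : Q} (h : C.mul a b = some c) : C.D c = C.D a := by
  have h1 := C.D_mul a
  have h2 := C.const2 _ _ _ _ _ h1 h
  obtain ⟨t, ht⟩ := Option.isSome_iff_exists.mp h2
  obtain ⟨p, hp1, hp2⟩ := C.const1 (C.D a) a b c t h ht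
  have hpa : p = a := by
    rw [h1] at hp1; exact (Option.some_inj.mp hp1).symm
  rw [hpa, h] at hp2
  have htc : t = c := (Option.some_inj.mp hp2).symm
  rw [htc] at ht
  exact (C.D_unique c (C.D a) (fun s u hu => C.D_ri a s u hu) ht).symm

/-- In the presence of D-inverses, `x · D(inv x) = x`. -/
lemma aux_mul_R {inv : Q → Q} (hinv : ∀ s, C.IsDInv s (inv s)) (x : Q) :
    C.mul x (C.D (inv x)) = some x := by
  obtain ⟨h1, h2⟩ := hinv x
  have h3 := C.const2 _ _ _ _ _ h1 h2
  obtain ⟨t, ht⟩ := Option.isSome_iff_exists.mp h3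
  have := C.D_ri (inv x) x t ht
  rw [this] at ht; exact ht

/-- If `a·c = x` then `x · inv c = a`. -/
lemma aux_cancel {inv : Q → Q} (hinv : ∀ s, C.IsDInv s (inv s)) {a c x : Q}
    (h : C.mul a c = some x) : C.mul x (inv c) = some a := by
  obtain ⟨h1, _⟩ := hinv c
  have h2 := C.const2 _ _ _ _ _ h h1
  obtain ⟨t, ht⟩ := Option.isSome_iff_exists.mp h2
  have hta := C.D_ri c a t ht
  subst hta
  obtain ⟨p, hp1, hp2⟩ := C.const1 t c (inv c) (C.D c) t h1 ht
  have : p = x := by rw [h] at hp1; exact (Option.some_inj.mp hp1).symm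
  subst this; exact hp2

end Constellation

/-- A D-inverse constellation, viewed as a constellation with range via
`R(s) = s'·s = D(s')`, is strongly right cancellative. -/
theorem dInverse_strongly_rightCancellative {Q : Type*} (C : Constellation Q)
    (inv : Q → Q) (hinv : ∀ s, C.IsDInv s (inv s))
    (huniq : ∀ s t, C.IsDInv s t → t = inv s) :
    C.RightCancellative ∧
    (∀ e f s u v, C.IsProj e → C.IsProj f →
      C.mul e s = some u → C.mul f s = some v →
      C.D (inv u) = C.D (inv v) → e = f) := by
  have rc : C.RightCancellative := by
    intro a b c x ha hb
    have h1 := C.aux_cancel hinv ha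
    have h2 := C.aux_cancel hinv hb
    rw [h1] at h2
    exact Option.some_inj.mp h2
  refine ⟨rc, ?_⟩
  intro e f s u v he hf hu hv hR
  obtain ⟨te, hte⟩ := he
  obtain ⟨tf, htf⟩ := hf
  have heri : ∀ s t, C.mul s e = some t → t = s := by
    intro s t h; rw [hte] at h; exact C.D_ri te s t h
  have hfri : ∀ s t, C.mul s f = some t → t = s := by
    intro s t h; rw [htf] at h; exact C.D_ri tf s t h
  have hDe : C.D e = e := by rw [hte]; exact C.aux_D_D te
  have hDf : C.D f = f := by rw [htf]; exact C.aux_D_D tf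
  obtain ⟨hu1, hu2⟩ := hinv u
  obtain ⟨hv1, hv2⟩ := hinv v
  -- u · D(inv v) = u since D(inv v) = D(inv u)
  have huR : C.mul u (C.D (inv v)) = some u := by
    rw [← hR]; exact C.aux_mul_R hinv u
  -- w₁ := u · inv v, with w₁ · v = u
  obtain ⟨w₁, hw₁, hw₁v⟩ := C.const1 u (inv v) v (C.D (inv v)) u hv2 huR
  -- w₁ · (f · s) = u, so (w₁ · f) · s = u = e · s, hence w₁ · f = e
  obtain ⟨p, hp1, hp2⟩ := C.const1 w₁ f s v u hv hw₁v
  have hpe : p = e := rc p e s u hp2 hu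
  rw [hpe] at hp1
  -- f is a right identity, so w₁ = e
  have hw₁e : e = w₁ := hfri w₁ e hp1
  rw [← hw₁e] at hp1
  -- hp1 : C.mul e f = some e
  -- symmetric direction
  have hvR : C.mul v (C.D (inv u)) = some v := by
    rw [hR]; exact C.aux_mul_R hinv v
  obtain ⟨w₂, hw₂, hw₂u⟩ := C.const1 v (inv u) u (C.D (inv u)) v hu2 hvR
  obtain ⟨q, hq1, hq2⟩ := C.const1 w₂ e s u v hu hw₂u
  have hqf : q = f := rc q f s v hq2 hv
  rw [hqf] at hq1
  have hw₂f : f = w₂ := heri w₂ f hq1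
  rw [← hw₂f] at hq1
  -- hq1 : C.mul f e = some f
  -- so f is a D-inverse of e, and e is a D-inverse of e; by uniqueness e = f
  have hef : C.IsDInv e f := ⟨by rw [hDe]; exact hp1, by rw [hDf]; exact hq1⟩
  have hee' : C.mul e e = some e := by
    rw [hte]
    have h := C.D_mul (C.D te)
    rwa [C.aux_D_D te] at h
  have hee : C.IsDInv e e := ⟨by rw [hDe]; exact hee', by rw [hDe]; exact hee'⟩
  exact (huniq e e hee).trans (huniq e f hef).symm
end

section
/- If Q is a D-inverse constellation viewed as a constellation with range (R(s) = s'·s), then the derived category C(Q), with s∘t = s·t defined exactly when R(s) = D(t) and with the natural order, is an ordered groupoid with inverse operation s ↦ s'. In particular, if s ≤ t in the natural order then s' ≤ t'. -/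
open scoped Classical

section DerivedCategory
variable {Q : Type*} (C : Constellation Q) (inv : Q → Q)

/-- The range in a D-inverse constellation: `R(s) = D(s')`. -/
def Constellation.Rng (s : Q) : Q := C.D (inv s)

/-- Composition in the derived category: `s∘t = u` iff `R(s) = D(t)` and `s·t = u`. -/
def Constellation.GComp (s t u : Q) : Prop := C.D (inv s) = C.D t ∧ C.mul s t = some u

/-- The natural order on a constellation: `s ≤ t` iff `s = D(s)·t`. -/
def Constellation.NatLe (s t : Q) : Prop := C.mul (C.D s) t = some s

end DerivedCategory

section AuxLemmas
variable {Q : Type*} (C : Constellation Q) (inv : Q → Q)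

lemma aux_mul_D_right (x s : Q) (h : (C.mul s (C.D x)).isSome) :
    C.mul s (C.D x) = some s := by
  obtain ⟨t, ht⟩ := Option.isSome_iff_exists.mp h
  rw [ht, C.D_ri x s t ht]

lemma aux_inv_inv (hinv : ∀ s, C.IsDInv s (inv s))
    (huniq : ∀ s t, C.IsDInv s t → t = inv s) (s : Q) : inv (inv s) = s :=
  (huniq (inv s) s ⟨(hinv s).2, (hinv s).1⟩).symm

lemma aux_D_D (x : Q) : C.D (C.D x) = C.D x := by
  have h1 := C.D_mul x
  have h2 := C.D_mul (C.D x)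
  obtain ⟨t, ht⟩ := Option.isSome_iff_exists.mp (C.const2 _ _ _ _ _ h2 h1)
  obtain ⟨u, hu1, hu2⟩ := C.const1 _ _ _ _ _ h1 ht
  rw [h2] at hu1
  obtain rfl : C.D x = u := Option.some_inj.mp hu1
  rw [h1] at hu2
  obtain rfl : x = t := Option.some_inj.mp hu2
  exact C.D_unique x _ (fun a b hb => C.D_ri _ a b hb) ht

lemma aux_D_of_mul {s t u : Q} (h : C.mul s t = some u) : C.D u = C.D s := by
  have h1 := C.D_mul s
  obtain ⟨v, hv⟩ := Option.isSome_iff_exists.mp (C.const2 _ _ _ _ _ h1 h)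
  obtain ⟨q, hq1, hq2⟩ := C.const1 _ _ _ _ _ h hv
  rw [h1] at hq1
  obtain rfl : s = q := Option.some_inj.mp hq1
  rw [h] at hq2
  obtain rfl : u = v := Option.some_inj.mp hq2
  exact (C.D_unique u _ (fun a b hb => C.D_ri s a b hb) hv).symm

lemma aux_inv_proj (hinv : ∀ s, C.IsDInv s (inv s))
    (huniq : ∀ s t, C.IsDInv s t → t = inv s) (s : Q) :
    inv (C.D s) = C.D s := by
  have h : C.mul (C.D s) (C.D s) = some (C.D s) := by
    have := C.D_mul (C.D s); rwa [aux_D_D C s] at this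
  refine (huniq (C.D s) (C.D s) ⟨?_, ?_⟩).symm <;>
    · rw [h, aux_D_D C s]

/-- `s · R(s) = s` -/
lemma aux_mul_rng (hinv : ∀ s, C.IsDInv s (inv s)) (s : Q) :
    C.mul s (C.D (inv s)) = some s :=
  aux_mul_D_right C (inv s) s (C.const2 _ _ _ _ _ (hinv s).1 (hinv s).2)

/-- `s' · D(s) = s'` -/
lemma aux_inv_mul_D (hinv : ∀ s, C.IsDInv s (inv s)) (s : Q) :
    C.mul (inv s) (C.D s) = some (inv s) :=
  aux_mul_D_right C s (inv s) (C.const2 _ _ _ _ _ (hinv s).2 (hinv s).1)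

/-- inverse of a composable product -/
lemma aux_inv_of_comp (hinv : ∀ s, C.IsDInv s (inv s))
    (huniq : ∀ s t, C.IsDInv s t → t = inv s) {s t u : Q}
    (h : C.D (inv s) = C.D t) (hst : C.mul s t = some u) :
    C.mul (inv t) (inv s) = some (inv u) := by
  have h1 : C.mul (inv t) (C.D t) = some (inv t) := aux_inv_mul_D C inv hinv t
  have h2 : C.mul (C.D t) (inv s) = some (inv s) := by
    have := C.D_mul (inv s); rwa [h] at this
  obtain ⟨w, hw⟩ := Option.isSome_iff_exists.mp (C.const2 _ _ _ _ _ h1 h2)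
  -- t · w = s'
  obtain ⟨p, hp⟩ := Option.isSome_iff_exists.mp (C.const2 _ _ _ _ _ (hinv t).1 hw)
  obtain ⟨q, hq1, hq2⟩ := C.const1 _ _ _ _ _ hw hp
  rw [(hinv t).1] at hq1
  obtain rfl : C.D t = q := Option.some_inj.mp hq1
  rw [h2] at hq2
  obtain rfl : inv s = p := Option.some_inj.mp hq2
  -- u · w = D s
  obtain ⟨q2, hq21, hq22⟩ := C.const1 _ _ _ _ _ hp (hinv s).1
  rw [hst] at hq21
  obtain rfl : u = q2 := Option.some_inj.mp hq21
  -- s' · u = t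
  obtain ⟨p2, hp2⟩ := Option.isSome_iff_exists.mp (C.const2 _ _ _ _ _ (hinv s).2 hst)
  obtain ⟨q3, hq31, hq32⟩ := C.const1 _ _ _ _ _ hst hp2
  rw [(hinv s).2] at hq31
  obtain rfl : C.D (inv s) = q3 := Option.some_inj.mp hq31
  rw [h] at hq32
  rw [C.D_mul t] at hq32
  obtain rfl : t = p2 := Option.some_inj.mp hq32
  -- w · u = D t'
  obtain ⟨q4, hq41, hq42⟩ := C.const1 _ _ _ _ _ hp2 (hinv t).2
  rw [hw] at hq41
  obtain rfl : w = q4 := Option.some_inj.mp hq41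
  -- conclude: w is the D-inverse of u
  have hDw : C.D w = C.D (inv t) := aux_D_of_mul C hw
  have hDu : C.D u = C.D s := aux_D_of_mul C hst
  have : C.IsDInv u w := ⟨by rw [hq22, hDu], by rw [hq42, hDw]⟩
  rw [← huniq u w this]
  exact hw

/-- `s ≤ t → s · t' = D s` -/
lemma aux_le_mul_inv (hinv : ∀ s, C.IsDInv s (inv s)) {s t : Q}
    (h : C.NatLe s t) : C.mul s (inv t) = some (C.D s) := by
  have h2 : C.mul (C.D s) (C.D t) = some (C.D s) :=
    aux_mul_D_right C t (C.D s) (C.const2 _ _ _ _ _ h (hinv t).1)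
  obtain ⟨q, hq1, hq2⟩ := C.const1 _ _ _ _ _ (hinv t).1 h2
  rw [h] at hq1
  obtain rfl : s = q := Option.some_inj.mp hq1
  exact hq2

/-- (OG1) -/
lemma aux_og1 (hinv : ∀ s, C.IsDInv s (inv s)) {s t : Q}
    (h : C.NatLe s t) : C.NatLe (inv s) (inv t) := by
  have h1 : C.mul s (inv t) = some (C.D s) := aux_le_mul_inv C inv hinv h
  have h2 : C.mul (inv s) (C.D s) = some (inv s) := aux_inv_mul_D C inv hinv s
  obtain ⟨q, hq1, hq2⟩ := C.const1 _ _ _ _ _ h1 h2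
  rw [(hinv s).2] at hq1
  obtain rfl : C.D (inv s) = q := Option.some_inj.mp hq1
  exact hq2

end AuxLemmas

/-- If `Q` is a D-inverse constellation viewed as a constellation with range
(`R(s) = s'·s = D(s')`), then the derived category, with `s∘t = s·t` defined exactly
when `R(s) = D(t)` and with the natural order, is an ordered groupoid with inverse
operation `s ↦ s'`; in particular `s ≤ t` implies `s' ≤ t'`. -/
theorem dInverse_derived_category_is_ordered_groupoid {Q : Type*} (C : Constellation Q)
    (inv : Q → Q) (hinv : ∀ s, C.IsDInv s (inv s))
    (huniq : ∀ s t, C.IsDInv s t → t = inv s) :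
    -- category laws: identities
    (∀ s, C.GComp inv (C.D s) s s ∧ C.GComp inv s (C.Rng inv s) s) ∧
    (∀ s t u, C.GComp inv s t u → C.D u = C.D s ∧ C.Rng inv u = C.Rng inv t) ∧
    -- associativity (Cat1 and Cat2)
    (∀ s t u v w, C.GComp inv s t v → C.GComp inv t u w →
      ∃ x, C.GComp inv v u x ∧ C.GComp inv s w x) ∧
    -- groupoid: s∘s' = D(s) and s'∘s = R(s)
    (∀ s, C.GComp inv s (inv s) (C.D s) ∧ C.GComp inv (inv s) s (C.Rng inv s)) ∧
    -- the natural order is a partial order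
    (∀ s, C.NatLe s s) ∧
    (∀ s t, C.NatLe s t → C.NatLe t s → s = t) ∧
    (∀ s t u, C.NatLe s t → C.NatLe t u → C.NatLe s u) ∧
    -- (OG1): s ≤ t implies s' ≤ t'
    (∀ s t, C.NatLe s t → C.NatLe (inv s) (inv t)) ∧
    -- (OG2): compatibility of the order with composition
    (∀ a b c d u v, C.NatLe a b → C.NatLe c d →
      C.GComp inv a c u → C.GComp inv b d v → C.NatLe u v) ∧
    -- (OG3): unique restrictions
    (∀ x e, C.IsProj e → C.NatLe e (C.D x) →
      ∃! y, C.NatLe y x ∧ C.D y = e) := by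
  refine ⟨?_, ?_, ?_, ?_, ?_, ?_, ?_, ?_, ?_, ?_⟩
  · -- identities
    intro s
    refine ⟨⟨?_, C.D_mul s⟩, ⟨?_, aux_mul_rng C inv hinv s⟩⟩
    · rw [aux_inv_proj C inv hinv huniq s, aux_D_D C s]
    · show C.D (inv s) = C.D (C.D (inv s))
      rw [aux_D_D C (inv s)]
  · -- D and R of a product
    intro s t u ⟨h1, h2⟩
    refine ⟨aux_D_of_mul C h2, ?_⟩
    show C.D (inv u) = C.D (inv t)
    exact aux_D_of_mul C (aux_inv_of_comp C inv hinv huniq h1 h2)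
  · -- associativity
    intro s t u v w ⟨h1, h2⟩ ⟨h3, h4⟩
    obtain ⟨x, hx⟩ := Option.isSome_iff_exists.mp (C.const2 _ _ _ _ _ h2 h4)
    obtain ⟨q, hq1, hq2⟩ := C.const1 _ _ _ _ _ h4 hx
    rw [h2] at hq1
    obtain rfl : v = q := Option.some_inj.mp hq1
    refine ⟨x, ⟨?_, hq2⟩, ⟨?_, hx⟩⟩
    · have : C.D (inv v) = C.D (inv t) :=
        aux_D_of_mul C (aux_inv_of_comp C inv hinv huniq h1 h2)
      rw [this, h3]
    · rw [aux_D_of_mul C h4, h1]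
  · -- groupoid inverses
    intro s
    exact ⟨⟨rfl, (hinv s).1⟩,
      ⟨by rw [aux_inv_inv C inv hinv huniq s], (hinv s).2⟩⟩
  · -- reflexivity
    exact fun s => C.D_mul s
  · -- antisymmetry
    intro s t hst hts
    have h1 : C.mul (inv s) t = some (C.D (inv s)) := by
      have := aux_le_mul_inv C inv hinv (aux_og1 C inv hinv hst)
      rwa [aux_inv_inv C inv hinv huniq t] at this
    have h2 : C.mul t (inv s) = some (C.D t) := aux_le_mul_inv C inv hinv hts
    have : C.IsDInv (inv s) t := ⟨h1, h2⟩
    have := huniq _ _ this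
    rw [this, aux_inv_inv C inv hinv huniq s]
  · -- transitivity
    intro s t u hst htu
    obtain ⟨q, hq1, hq2⟩ := C.const1 _ _ _ _ _ htu hst
    have : q = C.D s := C.D_ri t (C.D s) q hq1
    rwa [this] at hq2
  · -- (OG1)
    exact fun s t h => aux_og1 C inv hinv h
  · -- (OG2)
    intro a b c d u v hab hcd ⟨hac1, hac2⟩ ⟨hbd1, hbd2⟩
    obtain ⟨p, hp⟩ := Option.isSome_iff_exists.mp (C.const2 _ _ _ _ _ hab hbd2)
    obtain ⟨q, hq1, hq2⟩ := C.const1 _ _ _ _ _ hbd2 hp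
    rw [hab] at hq1
    obtain rfl : a = q := Option.some_inj.mp hq1
    -- a · (D c) = a
    have haDc : C.mul a (C.D c) = some a := by
      have := aux_mul_rng C inv hinv a; rwa [hac1] at this
    obtain ⟨q2, hq21, hq22⟩ := C.const1 _ _ _ _ _ hcd hac2
    rw [haDc] at hq21
    obtain rfl : a = q2 := Option.some_inj.mp hq21
    -- so a·d = u and a·d = p
    rw [hq22] at hq2
    obtain rfl : u = p := Option.some_inj.mp hq2
    show C.mul (C.D u) v = some u
    rw [aux_D_of_mul C hac2]
    exact hp
  · -- (OG3)
    intro x e ⟨s0, hs0⟩ he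
    have hDe : C.D e = e := by rw [hs0, aux_D_D C s0]
    have he' : C.mul e (C.D x) = some e := by
      have h : C.mul (C.D e) (C.D x) = some e := he
      rwa [hDe] at h
    obtain ⟨y, hy⟩ := Option.isSome_iff_exists.mp
      (C.const2 _ _ _ _ _ he' (C.D_mul x))
    have hDy : C.D y = e := by rw [aux_D_of_mul C hy, hDe]
    refine ⟨y, ⟨?_, hDy⟩, ?_⟩
    · show C.mul (C.D y) x = some y
      rw [hDy]; exact hy
    · rintro z ⟨hz1, hz2⟩
      have : C.mul e x = some z := by
        have h : C.mul (C.D z) x = some z := hz1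
        rwa [hz2] at h
      rw [hy] at this
      exact (Option.some_inj.mp this).symm
end

section
/- If C is an ordered groupoid, then defining s·t = s∘(R(s)|t) whenever R(s) ≤ D(t) makes C into a D-inverse constellation, in which the groupoid inverse s' is the unique D-inverse of s. -/
open scoped Classical

noncomputable def ogMul {G : Type*} (comp : G → G → Option G) (D R : G → G)
    (le : G → G → Prop) (res : G → G → G) : G → G → Option G :=
  fun s t => if le (R s) (D t) then comp s (res (R s) t) else none

/-- If `C` is an ordered groupoid (an object-free groupoid with a compatible partial
order and unique restrictions `res e x = e|x`), then defining `s·t = s∘(R(s)|t)`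
whenever `R(s) ≤ D(t)` makes it a D-inverse constellation, in which the groupoid
inverse `s'` is the unique D-inverse of `s`. -/
theorem ordered_groupoid_to_dInverse_constellation {G : Type*}
    (comp : G → G → Option G) (inv D R : G → G) (le : G → G → Prop) (res : G → G → G)
    -- category structure
    (hdef : ∀ s t, (comp s t).isSome ↔ R s = D t)
    (hDl : ∀ s, comp (D s) s = some s)
    (hRr : ∀ s, comp s (R s) = some s)
    (hDR : ∀ s t u, comp s t = some u → D u = D s ∧ R u = R t)
    (hassoc : ∀ s t u v w x, comp s t = some v → comp t u = some w →
      comp v u = some x → comp s w = some x)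
    -- groupoid: inverses
    (hinv : ∀ s, comp s (inv s) = some (D s) ∧ comp (inv s) s = some (R s))
    -- partial order
    (hrefl : ∀ s, le s s)
    (hantisymm : ∀ s t, le s t → le t s → s = t)
    (htrans : ∀ s t u, le s t → le t u → le s u)
    -- (OG1)
    (hOG1 : ∀ s t, le s t → le (inv s) (inv t))
    -- (OG2)
    (hOG2 : ∀ a b c d u v, le a b → le c d → comp a c = some u → comp b d = some v →
      le u v)
    -- (OG3): res e x is the unique restriction of x to the identity e ≤ D(x)
    (hres : ∀ e x, (∃ s, e = D s) → le e (D x) →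
      le (res e x) x ∧ D (res e x) = e ∧ ∀ y, le y x → D y = e → y = res e x) :
    ∃ C : Constellation G,
      (∀ s t, le (R s) (D t) → C.mul s t = comp s (res (R s) t)) ∧
      (∀ s t, ¬ le (R s) (D t) → C.mul s t = none) ∧
      (∀ s, C.D s = D s) ∧
      (∀ s, C.IsDInv s (inv s)) ∧
      (∀ s t, C.IsDInv s t → t = inv s) := by
  
  -- basic identity facts
  have hDD : ∀ s, D (D s) = D s := fun s => ((hDR _ _ _ (hDl s)).1).symm
  have hRD : ∀ s, R (D s) = D s := fun s => (hdef (D s) s).1 (by rw [hDl]; rfl)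
  have hDRid : ∀ s, D (R s) = R s := fun s => ((hdef s (R s)).1 (by rw [hRr]; rfl)).symm
  have hDinv : ∀ s, D (inv s) = R s := fun s =>
    ((hdef s (inv s)).1 (by rw [(hinv s).1]; rfl)).symm
  have hRinv : ∀ s, R (inv s) = D s := fun s =>
    (hdef (inv s) s).1 (by rw [(hinv s).2]; rfl)
  have hcancel : ∀ a b c u, comp a b = some u → comp a c = some u → b = c := by
    intro a b c u hab hac
    have hRab : R a = D b := (hdef a b).1 (by rw [hab]; rfl)
    have hRac : R a = D c := (hdef a c).1 (by rw [hac]; rfl)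
    have h1 : comp (inv a) u = some b :=
      hassoc (inv a) a b (R a) u b (hinv a).2 hab (by rw [hRab]; exact hDl b)
    have h2 : comp (inv a) u = some c :=
      hassoc (inv a) a c (R a) u c (hinv a).2 hac (by rw [hRac]; exact hDl c)
    exact Option.some.inj (h1.symm.trans h2)
  have hinvinv : ∀ s, inv (inv s) = s := by
    intro s
    have h1 : comp (inv s) (inv (inv s)) = some (R s) := by
      rw [(hinv (inv s)).1, hDinv]
    exact hcancel (inv s) _ _ _ h1 (hinv s).2
  have hRmono : ∀ s t, le s t → le (R s) (R t) := fun s t h =>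
    hOG2 (inv s) (inv t) s t (R s) (R t) (hOG1 s t h) h (hinv s).2 (hinv t).2
  have hRproj : ∀ s : G, ∃ x, R s = D x := fun s => ⟨inv s, (hDinv s).symm⟩
  -- restriction facts
  have hres_le : ∀ s t, le (R s) (D t) → le (res (R s) t) t := fun s t h =>
    (hres (R s) t (hRproj s) h).1
  have hres_D : ∀ s t, le (R s) (D t) → D (res (R s) t) = R s := fun s t h =>
    (hres (R s) t (hRproj s) h).2.1
  have hres_uniq : ∀ s t, le (R s) (D t) → ∀ y, le y t → D y = R s → y = res (R s) t :=
    fun s t h => (hres (R s) t (hRproj s) h).2.2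
  have hres_self : ∀ x, res (D x) x = x := fun x =>
    ((hres (D x) x ⟨x, rfl⟩ (hrefl _)).2.2 x (hrefl x) rfl).symm
  have hcomp_res : ∀ s t, le (R s) (D t) → ∃ u, comp s (res (R s) t) = some u :=
    fun s t h => Option.isSome_iff_exists.mp ((hdef _ _).2 (hres_D s t h).symm)
  set M : G → G → Option G := ogMul comp D R le res with hMdef
  have hMpos : ∀ s t, le (R s) (D t) → M s t = comp s (res (R s) t) := by
    intro s t h; rw [hMdef]; unfold ogMul; rw [if_pos h]
  have hMneg : ∀ s t, ¬ le (R s) (D t) → M s t = none := by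
    intro s t h; rw [hMdef]; unfold ogMul; rw [if_neg h]
  have hMsome : ∀ {s t u}, M s t = some u →
      le (R s) (D t) ∧ comp s (res (R s) t) = some u := by
    intro s t u h
    by_cases hc : le (R s) (D t)
    · exact ⟨hc, by rwa [hMpos _ _ hc] at h⟩
    · rw [hMneg _ _ hc] at h; exact absurd h (by simp)
  -- (Const1)
  have hconst1 : ∀ x y z w v, M y z = some w → M x w = some v →
      ∃ u, M x y = some u ∧ M u z = some v := by
    intro x y z w v hyz hxw
    obtain ⟨h1, hw⟩ := hMsome hyz
    obtain ⟨h2, hv⟩ := hMsome hxw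
    have hDw : D w = D y := (hDR _ _ _ hw).1
    have h2' : le (R x) (D y) := by rw [← hDw]; exact h2
    obtain ⟨u, hu⟩ := hcomp_res x y h2'
    have hRu : R u = R (res (R x) y) := (hDR _ _ _ hu).2
    have hay : le (res (R x) y) y := hres_le x y h2'
    have hRuRy : le (R u) (R y) := by rw [hRu]; exact hRmono _ _ hay
    have hRuDz : le (R u) (D z) := htrans _ _ _ hRuRy h1
    have hDyz : D (res (R y) z) = R y := hres_D y z h1
    have hDb : D (res (R u) z) = R u := hres_D u z hRuDz
    have hleb : le (R u) (D (res (R y) z)) := by rw [hDyz]; exact hRuRy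
    have hb2 : res (R u) (res (R y) z) = res (R u) z := by
      refine hres_uniq u z hRuDz _ ?_ ?_
      · exact htrans _ _ _ (hres_le u _ hleb) (hres_le y z h1)
      · exact hres_D u _ hleb
    have hble : le (res (R u) z) (res (R y) z) := by
      rw [← hb2]; exact hres_le u _ hleb
    have hcomp_ab : (comp (res (R x) y) (res (R u) z)).isSome := by
      apply (hdef _ _).2
      rw [hDb, hRu]
    obtain ⟨c, hc⟩ := Option.isSome_iff_exists.mp hcomp_ab
    have hcw : c = res (R x) w := by
      refine hres_uniq x w h2 c ?_ ?_
      · exact hOG2 _ _ _ _ _ _ hay hble hc hw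
      · rw [(hDR _ _ _ hc).1, hres_D x y h2']
    have hub : (comp u (res (R u) z)).isSome := (hdef _ _).2 hDb.symm
    obtain ⟨q, hq⟩ := Option.isSome_iff_exists.mp hub
    have hxc : comp x c = some q := hassoc x (res (R x) y) (res (R u) z) u c q hu hc hq
    have hqv : q = v := by
      rw [hcw] at hxc
      exact Option.some.inj (hxc.symm.trans hv)
    refine ⟨u, ?_, ?_⟩
    · rw [hMpos x y h2']; exact hu
    · rw [hMpos u z hRuDz, hq, hqv]
  -- (Const2)
  have hconst2 : ∀ x y z u v, M x y = some u → M y z = some v → (M x v).isSome := by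
    intro x y z u v hxy hyz
    obtain ⟨h1, _⟩ := hMsome hxy
    obtain ⟨h2, hv⟩ := hMsome hyz
    have hDv : D v = D y := (hDR _ _ _ hv).1
    have h3 : le (R x) (D v) := by rw [hDv]; exact h1
    rw [hMpos x v h3]
    exact (hdef _ _).2 (hres_D x v h3).symm
  -- D_mul
  have hDmul : ∀ x, M (D x) x = some x := by
    intro x
    have h : le (R (D x)) (D x) := by rw [hRD]; exact hrefl _
    rw [hMpos _ _ h]
    have h2 : res (R (D x)) x = x := by rw [hRD]; exact hres_self x
    rw [h2]; exact hDl x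
  -- D_ri
  have hDri : ∀ x s t, M s (D x) = some t → t = s := by
    intro x s t h
    obtain ⟨h1, heq⟩ := hMsome h
    have h1' : le (R s) (D x) := by rw [hDD] at h1; exact h1
    have h2 : res (R s) (D x) = R s :=
      (hres_uniq s (D x) h1 (R s) h1' (hDRid s)).symm
    rw [h2, hRr s] at heq
    exact (Option.some.inj heq).symm
  -- D_unique
  have hDuniq : ∀ x e, (∀ s t, M s e = some t → t = s) → M e x = some x → e = D x := by
    intro x e hri hex
    obtain ⟨h1, heq⟩ := hMsome hex
    have hDe : D x = D e := (hDR _ _ _ heq).1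
    have hMe : M (D e) e = some e := by
      have h : le (R (D e)) (D e) := by rw [hRD]; exact hrefl _
      rw [hMpos _ _ h]
      have h2 : res (R (D e)) e = e := by rw [hRD]; exact hres_self e
      rw [h2]; exact hDl e
    have h3 := hri (D e) e hMe
    rw [hDe]; exact h3
  -- inverse facts
  have hdinv1 : ∀ s, M s (inv s) = some (D s) := by
    intro s
    have h : le (R s) (D (inv s)) := by rw [hDinv]; exact hrefl _
    rw [hMpos _ _ h]
    have h2 : res (R s) (inv s) = inv s :=
      (hres_uniq s (inv s) h (inv s) (hrefl _) (hDinv s)).symm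
    rw [h2]; exact (hinv s).1
  have hdinv2 : ∀ s, M (inv s) s = some (D (inv s)) := by
    intro s
    have h : le (R (inv s)) (D s) := by rw [hRinv]; exact hrefl _
    rw [hMpos _ _ h]
    have h2 : res (R (inv s)) s = s := by rw [hRinv]; exact hres_self s
    rw [h2, (hinv s).2, hDinv]
  have huniq : ∀ s t, M s t = some (D s) → M t s = some (D t) → t = inv s := by
    intro s t h1 h2
    obtain ⟨hle1, he1⟩ := hMsome h1
    obtain ⟨hle2, he2⟩ := hMsome h2
    have hst : res (R s) t = inv s := hcancel s _ _ _ he1 (hinv s).1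
    have hts : res (R t) s = inv t := hcancel t _ _ _ he2 (hinv t).1
    have hl1 : le (inv s) t := by rw [← hst]; exact hres_le s t hle1
    have hl2 : le (inv t) s := by rw [← hts]; exact hres_le t s hle2
    have hl3 : le t (inv s) := by
      have h4 := hOG1 _ _ hl2
      rwa [hinvinv] at h4
    exact hantisymm _ _ hl3 hl1
  exact ⟨⟨M, D, hconst1, hconst2, hDmul, hDri, hDuniq⟩, hMpos, hMneg, fun s => rfl,
    fun s => ⟨hdinv1 s, hdinv2 s⟩, fun s t h => huniq s t h.1 h.2⟩
end

section
/- A regular pre-constellation P is inverse (every element has a unique inverse) if and only if for all idempotents e, f of P, if e = e·(f·e) and f = f·(e·f) then e = f. -/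
/-- A pre-constellation: a partial binary operation satisfying (Const1) and (Const2). -/
structure PreConstellation (P : Type*) where
  mul : P → P → Option P
  const1 : ∀ x y z w v, mul y z = some w → mul x w = some v →
    ∃ u, mul x y = some u ∧ mul u z = some v
  const2 : ∀ x y z u v, mul x y = some u → mul y z = some v → (mul x v).isSome

namespace PreConstellation
variable {P : Type*} (C : PreConstellation P)

/-- `t` is an inverse of `s`: `s = s·(t·s)` and `t = t·(s·t)`. -/
def IsInv (s t : P) : Prop :=
  (∃ w, C.mul t s = some w ∧ C.mul s w = some s) ∧
  (∃ v, C.mul s t = some v ∧ C.mul t v = some t)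

/-- `P` is regular: every `x` has some `y` with `x = x·(y·x)`. -/
def Regular : Prop := ∀ x, ∃ y w, C.mul y x = some w ∧ C.mul x w = some x

/-- `e` is an idempotent. -/
def Idem (e : P) : Prop := C.mul e e = some e

end PreConstellation

section Aux
variable {P : Type*} (C : PreConstellation P)

/-- Basic facts about an inverse pair: if `t` is an inverse of `x` with `t·x = w`
and `x·t = v`, then `w·t = t`, `v·x = x`, and `w`, `v` are idempotents. -/
lemma inv_facts {x t w v : P} (htx : C.mul t x = some w) (hxw : C.mul x w = some x)
    (hxt : C.mul x t = some v) (htv : C.mul t v = some t) :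
    C.mul w t = some t ∧ C.mul v x = some x ∧ C.mul w w = some w ∧ C.mul v v = some v := by
  -- w·t = t
  obtain ⟨a, ha1, ha2⟩ := C.const1 t x t v t hxt htv
  rw [show a = w from Option.some_inj.mp (ha1.symm.trans htx)] at ha2
  -- v·x = x
  obtain ⟨b, hb1, hb2⟩ := C.const1 x t x w x htx hxw
  rw [show b = v from Option.some_inj.mp (hb1.symm.trans hxt)] at hb2
  -- w·w = w
  obtain ⟨z, hz⟩ := Option.isSome_iff_exists.mp (C.const2 w t x t w ha2 htx)
  obtain ⟨c, hc1, hc2⟩ := C.const1 w t x w z htx hz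
  rw [show c = t from Option.some_inj.mp (hc1.symm.trans ha2)] at hc2
  rw [show z = w from Option.some_inj.mp (hc2.symm.trans htx)] at hz
  -- v·v = v
  obtain ⟨z', hz'⟩ := Option.isSome_iff_exists.mp (C.const2 v x t x v hb2 hxt)
  obtain ⟨d, hd1, hd2⟩ := C.const1 v x t v z' hxt hz'
  rw [show d = x from Option.some_inj.mp (hd1.symm.trans hb2)] at hd2
  rw [show z' = v from Option.some_inj.mp (hd2.symm.trans hxt)] at hz'
  exact ⟨ha2, hb2, hz, hz'⟩

end Aux

/-- A regular pre-constellation is inverse iff for all idempotents `e`, `f`, whenever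
`e = e·(f·e)` and `f = f·(e·f)` we have `e = f`. -/
theorem regular_inverse_iff_idempotent_condition {P : Type*} (C : PreConstellation P)
    (hreg : C.Regular) :
    (∀ s, ∃! t, C.IsInv s t) ↔
    (∀ e f, C.Idem e → C.Idem f →
      (∃ w, C.mul f e = some w ∧ C.mul e w = some e) →
      (∃ v, C.mul e f = some v ∧ C.mul f v = some f) → e = f) := by
  constructor
  · intro huniq e f he hf h1 h2
    obtain ⟨t, _, hun⟩ := huniq e
    have h3 : C.IsInv e e := ⟨⟨e, he, he⟩, ⟨e, he, he⟩⟩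
    have h4 : C.IsInv e f := ⟨h1, h2⟩
    rw [hun e h3, hun f h4]
  · intro hcond x
    obtain ⟨y, w, hyx, hxw⟩ := hreg x
    -- x·y exists, equals u, with u·x = x
    obtain ⟨u, hxy, hux⟩ := C.const1 x y x w x hyx hxw
    -- y·u exists; call it t
    obtain ⟨t, hyu⟩ := Option.isSome_iff_exists.mp (C.const2 y x y w u hyx hxy)
    -- t·x = w
    obtain ⟨a, ha1, ha2⟩ := C.const1 y u x x w hux hyx
    rw [show a = t from Option.some_inj.mp (ha1.symm.trans hyu)] at ha2
    -- x·t exists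
    obtain ⟨v0, hxt⟩ := Option.isSome_iff_exists.mp (C.const2 x y u u t hxy hyu)
    -- u·u = v0
    obtain ⟨b, hb1, hb2⟩ := C.const1 x y u t v0 hyu hxt
    rw [show b = u from Option.some_inj.mp (hb1.symm.trans hxy)] at hb2
    -- v0 = u, so u idempotent and x·t = u
    obtain ⟨c, hc1, hc2⟩ := C.const1 u x y u v0 hxy hb2
    rw [show c = x from Option.some_inj.mp (hc1.symm.trans hux)] at hc2
    rw [show v0 = u from Option.some_inj.mp (hc2.symm.trans hxy)] at hxt hb2
    -- t·u = t
    obtain ⟨d, hd1, hd2⟩ := C.const1 y u u u t hb2 hyu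
    rw [show d = t from Option.some_inj.mp (hd1.symm.trans hyu)] at hd2
    refine ⟨t, ⟨⟨w, ha2, hxw⟩, ⟨u, hxt, hd2⟩⟩, ?_⟩
    -- uniqueness: any inverse t' equals t
    rintro t' ⟨⟨w', ht'x, hxw'⟩, ⟨v', hxt', ht'v'⟩⟩
    obtain ⟨hwt, hvx, hww, hvv⟩ := inv_facts C ha2 hxw hxt hd2
    obtain ⟨hw't', hv'x, hw'w', hv'v'⟩ := inv_facts C ht'x hxw' hxt' ht'v'
    -- x·w' = x
    obtain ⟨z1, hz1⟩ := Option.isSome_iff_exists.mp (C.const2 x t' x v' w' hxt' ht'x)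
    obtain ⟨e1, he1, he2⟩ := C.const1 x t' x w' z1 ht'x hz1
    rw [show e1 = v' from Option.some_inj.mp (he1.symm.trans hxt')] at he2
    rw [show z1 = x from Option.some_inj.mp (he2.symm.trans hv'x)] at hz1
    -- w·w' = w
    obtain ⟨f1, hf1, hf2⟩ := C.const1 t x w' x w hz1 ha2
    rw [show f1 = w from Option.some_inj.mp (hf1.symm.trans ha2)] at hf2
    -- w'·w = w'
    obtain ⟨g1, hg1, hg2⟩ := C.const1 t' x w x w' hxw ht'x
    rw [show g1 = w' from Option.some_inj.mp (hg1.symm.trans ht'x)] at hg2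
    -- w = w'
    have hweq : w = w' := hcond w w' hww hw'w' ⟨w', hg2, hf2⟩ ⟨w, hf2, hg2⟩
    -- v'·u = u   (u = x·t)
    obtain ⟨z2, hz2⟩ := Option.isSome_iff_exists.mp (C.const2 v' x t x u hv'x hxt)
    obtain ⟨i1, hi1, hi2⟩ := C.const1 v' x t u z2 hxt hz2
    rw [show i1 = x from Option.some_inj.mp (hi1.symm.trans hv'x)] at hi2
    rw [show z2 = u from Option.some_inj.mp (hi2.symm.trans hxt)] at hz2
    -- u·v' = v'
    obtain ⟨z3, hz3⟩ := Option.isSome_iff_exists.mp (C.const2 u x t' x v' hvx hxt')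
    obtain ⟨j1, hj1, hj2⟩ := C.const1 u x t' v' z3 hxt' hz3
    rw [show j1 = x from Option.some_inj.mp (hj1.symm.trans hvx)] at hj2
    rw [show z3 = v' from Option.some_inj.mp (hj2.symm.trans hxt')] at hz3
    -- u = v'
    have hveq : u = v' := hcond u v' hvv hv'v' ⟨u, hz2, hvv⟩ ⟨v', hz3, hv'v'⟩
    -- t'·u = t'
    have ht'u : C.mul t' u = some t' := by rw [hveq]; exact ht'v'
    obtain ⟨k1, hk1, hk2⟩ := C.const1 t' x t u t' hxt ht'u
    rw [show k1 = w' from Option.some_inj.mp (hk1.symm.trans ht'x)] at hk2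
    -- w'·t = t' ; but w' = w and w·t = t
    rw [← hweq] at hk2
    exact Option.some_inj.mp (hk2.symm.trans hwt)
end

section
/- If P is an inverse pre-constellation satisfying (i) for idempotents e, f, if e·f and f·e both exist then they are equal, and (ii) if s·e exists for an idempotent e then s·e = s, then defining D(s) = s·s' (where s' is the unique inverse of s) makes P a D-inverse constellation in which s' is the D-inverse of s. -/
open scoped Classical

/-- If `P` is an inverse pre-constellation such that (i) for idempotents `e, f`, if
`e·f` and `f·e` both exist then they are equal, and (ii) if `s·e` exists for an
idempotent `e` then `s·e = s`, then defining `D(s) = s·s'` makes `P` a D-inverse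
constellation in which `s'` is the D-inverse of `s`. -/
theorem inverse_preconstellation_is_dInverse_constellation {P : Type*}
    (Cp : PreConstellation P) (inv : P → P)
    (hinv : ∀ s, Cp.IsInv s (inv s))
    (huniq : ∀ s t, Cp.IsInv s t → t = inv s)
    (hi : ∀ e f u v, Cp.Idem e → Cp.Idem f →
      Cp.mul e f = some u → Cp.mul f e = some v → u = v)
    (hii : ∀ s e u, Cp.Idem e → Cp.mul s e = some u → u = s) :
    ∃ C : Constellation P, C.mul = Cp.mul ∧
      (∀ s, Cp.mul s (inv s) = some (C.D s)) ∧
      (∀ s, C.IsDInv s (inv s)) ∧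
      (∀ s t, C.IsDInv s t → t = inv s) := by
  classical
  have hsym : ∀ s, Cp.IsInv (inv s) s := fun s => ⟨(hinv s).2, (hinv s).1⟩
  have hinvinv : ∀ s, inv (inv s) = s := fun s => (huniq _ _ (hsym s)).symm
  set Dfun : P → P := fun s => (Cp.mul s (inv s)).getD s with hDfun
  have hD : ∀ s, Cp.mul s (inv s) = some (Dfun s) := by
    intro s
    obtain ⟨v, h1, _⟩ := (hinv s).2
    simp [hDfun, h1]
  have hidem : ∀ s, Cp.Idem (Dfun s) := by
    intro s
    obtain ⟨v, h1, h2⟩ := (hinv s).2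
    obtain ⟨u, hu1, hu2⟩ := Cp.const1 s (inv s) v (inv s) v h2 h1
    have huv : u = v := by rw [h1] at hu1; exact (Option.some_inj.mp hu1).symm
    have hv : v = Dfun s := by
      have := hD s; rw [h1] at this; exact Option.some_inj.mp this
    subst huv; rw [hv] at hu2; exact hu2
  have hDmul : ∀ s, Cp.mul (Dfun s) s = some s := by
    intro s
    obtain ⟨w, hw1, hw2⟩ := (hinv s).1
    obtain ⟨u, hu1, hu2⟩ := Cp.const1 s (inv s) s w s hw1 hw2
    have : u = Dfun s := by have := hD s; rw [this] at hu1; exact (Option.some_inj.mp hu1).symm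
    rwa [this] at hu2
  have hDri : ∀ x s t, Cp.mul s (Dfun x) = some t → t = s :=
    fun x s t h => hii s _ t (hidem x) h
  have hDuniq : ∀ x e, (∀ s t, Cp.mul s e = some t → t = s) → Cp.mul e x = some x →
      e = Dfun x := by
    intro x e _ he
    have hsome : (Cp.mul e (Dfun x)).isSome := Cp.const2 e x (inv x) x (Dfun x) he (hD x)
    obtain ⟨u, hu⟩ := Option.isSome_iff_exists.mp hsome
    have hue : u = e := hii e _ u (hidem x) hu
    subst hue
    obtain ⟨u', hu'1, hu'2⟩ := Cp.const1 u x (inv x) (Dfun x) u (hD x) hu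
    have hux : u' = x := by rw [he] at hu'1; exact (Option.some_inj.mp hu'1).symm
    subst hux
    have := hD u'; rw [this] at hu'2
    exact (Option.some_inj.mp hu'2).symm
  refine ⟨⟨Cp.mul, Dfun, Cp.const1, Cp.const2, hDmul, hDri, hDuniq⟩, rfl, hD, ?_, ?_⟩
  · intro s
    refine ⟨hD s, ?_⟩
    have := hD (inv s)
    rw [hinvinv s] at this
    exact this
  · intro s t ht
    obtain ⟨h1, h2⟩ := ht
    apply huniq
    constructor
    · refine ⟨Dfun t, h2, ?_⟩
      have hsome : (Cp.mul s (Dfun t)).isSome := Cp.const2 s t s (Dfun s) (Dfun t) h1 h2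
      obtain ⟨u, hu⟩ := Option.isSome_iff_exists.mp hsome
      rw [hu, hii s _ u (hidem t) hu]
    · refine ⟨Dfun s, h1, ?_⟩
      have hsome : (Cp.mul t (Dfun s)).isSome := Cp.const2 t s t (Dfun t) (Dfun s) h2 h1
      obtain ⟨u, hu⟩ := Option.isSome_iff_exists.mp hsome
      rw [hu, hii t _ u (hidem s) hu]
end
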